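/- arXiv:2111.15349 — 3 statements merged into one kernel-verified Lean document; each statement's English description precedes it below -/
import Mathlib

section
/- Let G be a locally compact group with Haar measure vol. Then the following three conditions are equivalent: (a) m(G) < ∞; (b) G has an open compact subgroup; (c) the identity component G₀ of G is compact. Moreover, if these equivalent conditions hold, then m(G) = vol(G₀). -/
/-!
An open subgroup is clopen, hence contains `G₀`, and an open subgroup of finite Haar measure is
compact because a noncompact locally compact group has infinite Haar measure. If `G₀` is compact,
choose a compact neighbourhood `K` of it: the component of `1` in `K` is cut out by clopen subsets
of `K` (pass to the Hausdorff quotient of `K`), which gives a compact open neighbourhood `V` of `1`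
in `G`, and the stabilizer of `V` under left translation is a compact open subgroup (van Dantzig).
Running the same argument inside a compact open subgroup, whose Haar measure is outer regular,
produces open subgroups of measure arbitrarily close to `vol G₀`.
-/

open MeasureTheory ENNReal Set Topology Pointwise

theorem SeparationQuotient.preimage_connectedComponent {X : Type*} [TopologicalSpace X] (x : X) :
    mk ⁻¹' connectedComponent (mk x) = connectedComponent x := by
  refine isQuotientMap_mk.isCoinducing.preimage_connectedComponent (fun y => ?_) x
  obtain ⟨z, rfl⟩ := surjective_mk y
  refine IsPathConnected.isConnected ⟨z, rfl, fun {w} hw => ?_⟩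
  exact (mk_eq_mk.1 hw.symm).joinedIn rfl hw

theorem exists_isClopen_subset_of_connectedComponent_subset_of_t2Space {X : Type*}
    [TopologicalSpace X] [CompactSpace X] [T2Space X] {x : X} {U : Set X} (hU : IsOpen U)
    (hxU : connectedComponent x ⊆ U) : ∃ V, IsClopen V ∧ x ∈ V ∧ V ⊆ U := by
  have : Nonempty {V : Set X // IsClopen V ∧ x ∈ V} := ⟨⟨univ, isClopen_univ, mem_univ x⟩⟩
  obtain ⟨V, hVU⟩ := exists_subset_nhds_of_compactSpace
    (V := fun V : {V : Set X // IsClopen V ∧ x ∈ V} => V.1)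
    (fun V W => ⟨⟨V.1 ∩ W.1, V.2.1.inter W.2.1, V.2.2, W.2.2⟩, inter_subset_left,
      inter_subset_right⟩)
    (fun V => V.2.1.isClosed)
    (fun y hy => hU.mem_nhds (hxU (by rwa [connectedComponent_eq_iInter_isClopen])))
  exact ⟨V.1, V.2.1, V.2.2, hVU⟩

open SeparationQuotient in
theorem exists_isClopen_subset_of_connectedComponent_subset {X : Type*}
    [TopologicalSpace X] [CompactSpace X] [R1Space X] {x : X} {U : Set X} (hU : IsOpen U)
    (hxU : connectedComponent x ⊆ U) : ∃ V, IsClopen V ∧ x ∈ V ∧ V ⊆ U := by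
  have : CompactSpace (SeparationQuotient X) := surjective_mk.compactSpace continuous_mk
  obtain ⟨V, hV, hxV, hVU⟩ := exists_isClopen_subset_of_connectedComponent_subset_of_t2Space
    (isOpenMap_mk U hU) (x := mk x) (by
      rw [← image_preimage_eq (connectedComponent (mk x)) surjective_mk,
        preimage_connectedComponent]
      exact image_mono hxU)
  exact ⟨_, hV.preimage continuous_mk, hxV,
    (preimage_mono hVU).trans (preimage_image_mk_open hU).le⟩

theorem IsOpen.isOpen_image_val_of_subset_interior {X : Type*} [TopologicalSpace X] {K : Set X}
    {V : Set K} (hV : IsOpen V) (hVK : Subtype.val '' V ⊆ interior K) :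
    IsOpen (Subtype.val '' V) := by
  obtain ⟨O, hO, rfl⟩ := isOpen_induced_iff.1 hV
  rw [Subtype.image_preimage_coe] at hVK ⊢
  convert isOpen_interior.inter hO using 1
  exact (inter_subset_inter_left O interior_subset).antisymm' fun z hz => ⟨hVK hz, hz.2⟩

section TopologicalGroup

variable {G : Type*} [Group G] [TopologicalSpace G] [IsTopologicalGroup G]

theorem isOpen_stabilizer_of_isCompact {V : Set G} (hVc : IsCompact V) (hVo : IsOpen V) :
    IsOpen (MulAction.stabilizer G V : Set G) := by
  obtain ⟨W, hW, hWV⟩ := compact_open_separated_mul_left hVc hVo subset_rfl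
  have hsmul : ∀ g ∈ W, g • V ⊆ V := fun g hg => (smul_set_subset_mul hg).trans hWV
  refine Subgroup.isOpen_of_mem_nhds _
    (Filter.mem_of_superset (Filter.inter_mem hW (inv_mem_nhds_one G hW)) ?_)
  rintro g ⟨hg, hg'⟩
  refine (hsmul g hg).antisymm ?_
  simpa [subset_smul_set_iff] using hsmul g⁻¹ hg'

theorem exists_isOpen_isCompact_subgroup_subset {V : Set G} (hVc : IsCompact V)
    (hVo : IsOpen V) (hV1 : (1 : G) ∈ V) :
    ∃ H : Subgroup G, IsOpen (H : Set G) ∧ IsCompact (H : Set G) ∧ (H : Set G) ⊆ V := by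
  have hHV : (MulAction.stabilizer G V : Set G) ⊆ V := fun g hg => by
    simpa using (MulAction.mem_stabilizer_iff.1 hg).subset (smul_mem_smul_set hV1)
  have hHo := isOpen_stabilizer_of_isCompact hVc hVo
  exact ⟨_, hHo, hVc.of_isClosed_subset (Subgroup.isClosed_of_isOpen _ hHo) hHV, hHV⟩

theorem Subgroup.connectedComponent_one_subset {H : Subgroup G} (hH : IsOpen (H : Set G)) :
    connectedComponent (1 : G) ⊆ H :=
  IsClopen.connectedComponent_subset ⟨H.isClosed_of_isOpen hH, hH⟩ H.one_mem

variable [LocallyCompactSpace G]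

theorem exists_isOpen_isCompact_subgroup_subset_of_isCompact_connectedComponent
    (hG₀ : IsCompact (connectedComponent (1 : G))) {U : Set G}
    (hU : IsOpen U) (hG₀U : connectedComponent (1 : G) ⊆ U) :
    ∃ H : Subgroup G, IsOpen (H : Set G) ∧ IsCompact (H : Set G) ∧ (H : Set G) ⊆ U := by
  obtain ⟨K, hKc, hG₀K, hKU⟩ := exists_compact_between hG₀ hU hG₀U
  have hK1 : (1 : G) ∈ K := interior_subset (hG₀K mem_connectedComponent)
  have : CompactSpace K := isCompact_iff_compactSpace.1 hKc
  have hcc : connectedComponent (⟨1, hK1⟩ : K) ⊆ Subtype.val ⁻¹' interior K := fun y hy =>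
    hG₀K (continuous_subtype_val.mapsTo_connectedComponent _ hy)
  obtain ⟨V, hV, hV1, hVK⟩ := exists_isClopen_subset_of_connectedComponent_subset
    (isOpen_interior.preimage continuous_subtype_val) hcc
  have hVK' : Subtype.val '' V ⊆ interior K := image_subset_iff.2 hVK
  obtain ⟨H, hHo, hHc, hHV⟩ := exists_isOpen_isCompact_subgroup_subset
    (hV.isClosed.isCompact.image continuous_subtype_val)
    (hV.isOpen.isOpen_image_val_of_subset_interior hVK') ⟨_, hV1, rfl⟩
  exact ⟨H, hHo, hHc, hHV.trans (hVK'.trans (interior_subset.trans hKU))⟩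

theorem isCompact_connectedComponent_one_iff :
    IsCompact (connectedComponent (1 : G)) ↔
      ∃ H : Subgroup G, IsOpen (H : Set G) ∧ IsCompact (H : Set G) := by
  refine ⟨fun hG₀ => ?_, fun ⟨H, hHo, hHc⟩ =>
    hHc.of_isClosed_subset isClosed_connectedComponent (H.connectedComponent_one_subset hHo)⟩
  obtain ⟨H, hHo, hHc, -⟩ :=
    exists_isOpen_isCompact_subgroup_subset_of_isCompact_connectedComponent hG₀ isOpen_univ
      (subset_univ _)
  exact ⟨H, hHo, hHc⟩

end TopologicalGroup

section Haar

variable {G : Type*} [Group G] [TopologicalSpace G] [IsTopologicalGroup G]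
  [MeasurableSpace G] [BorelSpace G] (μ : Measure G) [μ.IsHaarMeasure]

theorem Subgroup.isCompact_of_isOpen_of_measure_ne_top [LocallyCompactSpace G] {H : Subgroup G}
    (hHo : IsOpen (H : Set G)) (hμH : μ H ≠ ∞) : IsCompact (H : Set G) := by
  have hemb : IsOpenEmbedding H.subtype := hHo.isOpenEmbedding_subtypeVal
  have : LocallyCompactSpace H := hemb.locallyCompactSpace
  have := Measure.IsHaarMeasure.comap (mH := inferInstance) μ hemb
  rw [isCompact_iff_compactSpace]
  by_contra hnc
  have : NoncompactSpace H := not_compactSpace_iff.1 hnc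
  apply hμH
  rw [← Subtype.range_coe (s := (H : Set G)), ← image_univ, ← Subgroup.coe_subtype,
    ← hemb.measurableEmbedding.comap_apply]
  exact measure_univ_of_isMulLeftInvariant _

theorem iInf_measure_isOpen_subgroup_lt_top_iff [LocallyCompactSpace G] :
    ⨅ (H : Subgroup G) (_ : IsOpen (H : Set G)), μ H < ∞ ↔
      ∃ H : Subgroup G, IsOpen (H : Set G) ∧ IsCompact (H : Set G) := by
  simp only [iInf_lt_iff]
  exact ⟨fun ⟨H, hHo, hμH⟩ => ⟨H, hHo, H.isCompact_of_isOpen_of_measure_ne_top μ hHo hμH.ne⟩,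
    fun ⟨H, hHo, hHc⟩ => ⟨H, hHo, hHc.measure_lt_top⟩⟩

theorem exists_isOpen_subgroup_measure_lt {K : Subgroup G} (hKo : IsOpen (K : Set G))
    (hKc : IsCompact (K : Set G)) {r : ℝ≥0∞} (hr : μ (connectedComponent 1) < r) :
    ∃ H : Subgroup G, IsOpen (H : Set G) ∧ μ H < r := by
  have hemb : IsOpenEmbedding K.subtype := hKo.isOpenEmbedding_subtypeVal
  have : CompactSpace K := isCompact_iff_compactSpace.1 hKc
  have := Measure.IsHaarMeasure.comap (mH := inferInstance) μ hemb
  have hν : ∀ s, μ.comap K.subtype s = μ (K.subtype '' s) :=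
    hemb.measurableEmbedding.comap_apply μ
  have hG₀ : μ.comap K.subtype (K.subtype ⁻¹' connectedComponent 1) < r := by
    rwa [hν, image_preimage_eq_of_subset (by simpa using K.connectedComponent_one_subset hKo)]
  -- Haar measures on the compact group `K` are regular.
  obtain ⟨U, hG₀U, hUo, hUr⟩ := exists_isOpen_lt_of_lt _ _ hG₀
  obtain ⟨H, hHo, -, hHU⟩ :=
    exists_isOpen_isCompact_subgroup_subset_of_isCompact_connectedComponent
      isClosed_connectedComponent.isCompact hUo
      fun y hy => hG₀U (continuous_subtype_val.mapsTo_connectedComponent 1 hy)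
  refine ⟨H.map K.subtype, hemb.isOpenMap _ hHo, ?_⟩
  rw [Subgroup.coe_map, ← hν]
  exact (measure_mono hHU).trans_lt hUr

theorem iInf_measure_isOpen_subgroup_eq {K : Subgroup G} (hKo : IsOpen (K : Set G))
    (hKc : IsCompact (K : Set G)) :
    ⨅ (H : Subgroup G) (_ : IsOpen (H : Set G)), μ H = μ (connectedComponent 1) := by
  refine le_antisymm (le_of_forall_gt fun r hr => ?_)
    (le_iInf₂ fun H hHo => measure_mono (H.connectedComponent_one_subset hHo))
  obtain ⟨H, hHo, hHr⟩ := exists_isOpen_subgroup_measure_lt μ hKo hKc hr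
  exact (iInf₂_le H hHo).trans_lt hHr

end Haar

/-- **Remark 2.4 (3).** For a locally compact group `G` with left Haar measure `μ`,
the following are equivalent: (a) `m(G) < ∞`; (b) `G` has a compact open subgroup;
(c) the identity component `G₀` is compact. Moreover, under these equivalent conditions,
`m(G) = vol(G₀)`. -/
theorem mG_finite_iff
    {G : Type*} [Group G] [TopologicalSpace G] [IsTopologicalGroup G]
    [LocallyCompactSpace G] [MeasurableSpace G] [BorelSpace G]
    (μ : Measure G) [μ.IsHaarMeasure]
    (mG : ℝ≥0∞)
    (hmG : mG = ⨅ (H : Subgroup G) (_ : IsOpen (H : Set G)), μ (H : Set G)) :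
    (mG < ⊤ ↔ ∃ H : Subgroup G, IsOpen (H : Set G) ∧ IsCompact (H : Set G)) ∧
    (mG < ⊤ ↔ IsCompact (connectedComponent (1 : G))) ∧
    (mG < ⊤ → mG = μ (connectedComponent (1 : G))) := by
  subst hmG
  have hfin := iInf_measure_isOpen_subgroup_lt_top_iff μ
  refine ⟨hfin, hfin.trans isCompact_connectedComponent_one_iff.symm, fun h => ?_⟩
  obtain ⟨K, hKo, hKc⟩ := hfin.1 h
  exact iInf_measure_isOpen_subgroup_eq μ hKo hKc
end

section
/- Let G be a connected unimodular locally compact group with Haar measure dg, and let φ1, φ2 : G → [0,1] be integrable functions with ‖φ1‖ + ‖φ2‖ − vol(G) ≥ 0. Then for every real t with 0 ≤ t ≤ ‖φ1‖ + ‖φ2‖ − vol(G) one has ∫_G max(φ1*φ2(g) − t, 0) dg = ‖φ1‖·‖φ2‖ − t·vol(G). -/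
/-!
A Haar measure of finite total mass lives on a compact group, where it is moreover invariant under
inversion. For `a, b ∈ [0, 1]` one has `a b ≥ a + b - 1`, so integrating gives
`φ₁ ⋆ φ₂ (g) ≥ ‖φ₁‖ + ‖φ₂‖ - vol G ≥ t` for every `g`: the truncation `f_t` is inactive and the
integral equals `∫ φ₁ ⋆ φ₂ - t vol G = ‖φ₁‖ ‖φ₂‖ - t vol G` by Fubini.

Without second countability, the product σ-algebra does not see the group law, so measurability
of `φ₁ ⋆ φ₂` and Fubini are obtained by approximating `φ₁, φ₂` in `L¹` by continuous
`[0, 1]`-valued functions: the convolution is `1`-Lipschitz in each `L¹` argument, hence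
`φ₁ ⋆ φ₂` is a uniform limit of convolutions of continuous functions.
-/

open MeasureTheory Filter Set Topology
open scoped ENNReal

namespace MeasureTheory

section HaarMeasure

variable {G : Type*} [Group G] [TopologicalSpace G] [IsTopologicalGroup G]
  [MeasurableSpace G] [BorelSpace G]

theorem compactSpace_of_measure_univ_ne_top [WeaklyLocallyCompactSpace G] (μ : Measure G)
    [μ.IsOpenPosMeasure] [μ.IsMulLeftInvariant] (hμ : μ univ ≠ ∞) : CompactSpace G := by
  by_contra hG
  rw [not_compactSpace_iff] at hG
  exact hμ (measure_univ_of_isMulLeftInvariant μ)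

/-- On a compact group the right-invariant measure `μ.inv` is a left Haar measure with the same
total mass as `μ`, hence equal to `μ` by uniqueness. -/
theorem isInvInvariant_of_compactSpace [CompactSpace G] (μ : Measure G) [μ.IsHaarMeasure]
    [μ.IsMulRightInvariant] : μ.IsInvInvariant := by
  have hμ : μ.inv = μ.inv.haarScalarFactor μ • μ :=
    Measure.isMulInvariant_eq_smul_of_compactSpace _ _
  have hmass : (μ.inv.haarScalarFactor μ : ℝ≥0∞) * μ univ = 1 * μ univ := by
    simpa [Measure.inv_apply] using (congrArg (· univ) hμ).symm
  rw [ENNReal.mul_left_inj (NeZero.ne _) (measure_ne_top _ _), ENNReal.coe_eq_one] at hmass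
  exact ⟨by rw [hμ, hmass, one_smul]⟩

theorem integral_inv_mul_eq_self {E : Type*} [NormedAddCommGroup E] [NormedSpace ℝ E]
    (μ : Measure G) [μ.IsMulRightInvariant] [μ.IsInvInvariant] (f : G → E) (g : G) :
    ∫ x, f (x⁻¹ * g) ∂μ = ∫ x, f x ∂μ :=
  (integral_inv_eq_self (fun x => f (x * g)) μ).trans (integral_mul_right_eq_self f g)

theorem Integrable.comp_inv_mul {E : Type*} [NormedAddCommGroup E] {μ : Measure G}
    [μ.IsMulRightInvariant] [μ.IsInvInvariant] {f : G → E} (hf : Integrable f μ) (g : G) :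
    Integrable (fun x => f (x⁻¹ * g)) μ :=
  (hf.comp_mul_right g).comp_inv

end HaarMeasure

theorem tendsto_integral_of_tendsto_integral_norm_sub {X : Type*} [MeasurableSpace X]
    {μ : Measure X} {φ : X → ℝ} {u : ℕ → X → ℝ}
    (hφ : Integrable φ μ) (hu : ∀ n, Integrable (u n) μ)
    (hφu : Tendsto (fun n => ∫ x, ‖φ x - u n x‖ ∂μ) atTop (𝓝 0)) :
    Tendsto (fun n => ∫ x, u n x ∂μ) atTop (𝓝 (∫ x, φ x ∂μ)) := by
  refine tendsto_iff_norm_sub_tendsto_zero.2 (squeeze_zero_norm (fun n => ?_) hφu)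
  rw [← integral_sub (hu n) hφ, norm_norm]
  refine (norm_integral_le_integral_norm _).trans_eq (integral_congr_ae ?_)
  exact Eventually.of_forall fun x => norm_sub_rev _ _

section Approximation

variable {X : Type*} [TopologicalSpace X] [NormalSpace X] [R1Space X] [WeaklyLocallyCompactSpace X]
  [MeasurableSpace X] [BorelSpace X] {μ : Measure X} [μ.Regular]

/-- Clamping a continuous approximant to `[0, 1]` keeps it continuous and only brings it closer
to a `[0, 1]`-valued function. -/
theorem Integrable.exists_continuous_Icc_integral_norm_sub_le {φ : X → ℝ} (hφ : Integrable φ μ)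
    (hφ01 : ∀ x, φ x ∈ Icc (0 : ℝ) 1) {ε : ℝ} (hε : 0 < ε) :
    ∃ u : X → ℝ, Continuous u ∧ Integrable u μ ∧ (∀ x, u x ∈ Icc (0 : ℝ) 1) ∧
      ∫ x, ‖φ x - u x‖ ∂μ ≤ ε := by
  obtain ⟨v, -, hvφ, hv, hvi⟩ := hφ.exists_hasCompactSupport_integral_sub_le hε
  set u : X → ℝ := fun x => projIcc 0 1 zero_le_one (v x)
  have hu : Continuous u := continuous_subtype_val.comp (continuous_projIcc.comp hv)
  have hclamp (a : ℝ) (ha : a ∈ Icc (0 : ℝ) 1) (x : X) : |a - u x| ≤ |a - v x| := by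
    simpa only [projIcc_of_mem _ ha] using abs_projIcc_sub_projIcc (h := zero_le_one) (c := a)
  have hui : Integrable u μ := by
    refine hvi.norm.mono' hu.aestronglyMeasurable (Eventually.of_forall fun x => ?_)
    simpa using hclamp 0 (left_mem_Icc.2 zero_le_one) x
  refine ⟨u, hu, hui, fun x => (projIcc 0 1 zero_le_one (v x)).2, hvφ.trans' ?_⟩
  exact integral_mono (hφ.sub hui).norm (hφ.sub hvi).norm fun x => hclamp _ (hφ01 x) x

theorem Integrable.exists_seq_continuous_Icc_tendsto {φ : X → ℝ} (hφ : Integrable φ μ)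
    (hφ01 : ∀ x, φ x ∈ Icc (0 : ℝ) 1) :
    ∃ u : ℕ → X → ℝ, (∀ n, Continuous (u n)) ∧ (∀ n, Integrable (u n) μ) ∧
      (∀ n x, u n x ∈ Icc (0 : ℝ) 1) ∧
      Tendsto (fun n => ∫ x, ‖φ x - u n x‖ ∂μ) atTop (𝓝 0) := by
  choose u hu hui hu01 hφu using fun n : ℕ =>
    hφ.exists_continuous_Icc_integral_norm_sub_le hφ01 (Nat.one_div_pos_of_nat (n := n))
  refine ⟨u, hu, hui, hu01, squeeze_zero (fun n => integral_nonneg fun x => norm_nonneg _) hφu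
    tendsto_one_div_add_atTop_nhds_zero_nat⟩

end Approximation

section Convolution

variable {G : Type*} [Group G] [MeasurableSpace G] {μ : Measure G} {φ₁ φ₂ ψ₁ ψ₂ : G → ℝ}

noncomputable def mulConv (μ : Measure G) (φ₁ φ₂ : G → ℝ) (g : G) : ℝ :=
  ∫ g', φ₁ g' * φ₂ (g'⁻¹ * g) ∂μ

theorem mulConv_nonneg (hφ₁ : ∀ x, 0 ≤ φ₁ x) (hφ₂ : ∀ x, 0 ≤ φ₂ x) (g : G) :
    0 ≤ mulConv μ φ₁ φ₂ g :=
  integral_nonneg fun _ => mul_nonneg (hφ₁ _) (hφ₂ _)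

theorem norm_mulConv_le_measureReal_univ [IsFiniteMeasure μ] (hφ₁ : ∀ x, φ₁ x ∈ Icc (0 : ℝ) 1)
    (hφ₂ : ∀ x, φ₂ x ∈ Icc (0 : ℝ) 1) (g : G) : ‖mulConv μ φ₁ φ₂ g‖ ≤ μ.real univ := by
  rw [Real.norm_eq_abs, abs_of_nonneg (mulConv_nonneg (fun x => (hφ₁ x).1) (fun x => (hφ₂ x).1) g),
    ← mul_one (μ.real univ), ← smul_eq_mul, ← integral_const]
  refine integral_mono_of_nonneg (Eventually.of_forall fun x => ?_) (integrable_const 1)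
    (Eventually.of_forall fun x => ?_)
  · exact mul_nonneg (hφ₁ x).1 (hφ₂ _).1
  · exact mul_le_one₀ (hφ₁ x).2 (hφ₂ _).1 (hφ₂ _).2

variable [TopologicalSpace G] [IsTopologicalGroup G] [BorelSpace G]

theorem continuous_mulConv [CompactSpace G] [IsFiniteMeasureOnCompacts μ] (h₁ : Continuous φ₁)
    (h₂ : Continuous φ₂) : Continuous (mulConv μ φ₁ φ₂) :=
  continuousOn_univ.1 <| continuousOn_integral_of_compact_support isCompact_univ
    (Continuous.continuousOn (by fun_prop)) (by simp)

theorem integral_mulConv_of_continuous [CompactSpace G] [IsFiniteMeasureOnCompacts μ]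
    [μ.IsMulLeftInvariant] (h₁ : Continuous φ₁) (h₂ : Continuous φ₂) :
    ∫ g, mulConv μ φ₁ φ₂ g ∂μ = (∫ x, φ₁ x ∂μ) * ∫ x, φ₂ x ∂μ := by
  unfold mulConv
  rw [integral_integral_swap_of_hasCompactSupport (by fun_prop) (.of_compactSpace _)]
  simp_rw [integral_const_mul, integral_mul_left_eq_self φ₂]
  exact integral_mul_const _ _

variable [μ.IsMulRightInvariant] [μ.IsInvInvariant]

theorem integrable_mul_comp_inv_mul (hφ₁ : Integrable φ₁ μ) (hφ₂ : Integrable φ₂ μ)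
    (hφ₂01 : ∀ x, φ₂ x ∈ Icc (0 : ℝ) 1) (g : G) :
    Integrable (fun g' => φ₁ g' * φ₂ (g'⁻¹ * g)) μ :=
  hφ₁.mul_bdd (hφ₂.comp_inv_mul g).aestronglyMeasurable <| Eventually.of_forall fun x =>
    abs_le.2 ⟨by linarith [(hφ₂01 (x⁻¹ * g)).1], (hφ₂01 _).2⟩

/-- Integrates the bound `a b ≥ a + b - 1` for `a, b ∈ [0, 1]`. -/
theorem integral_add_integral_sub_measureReal_univ_le_mulConv [IsFiniteMeasure μ]
    (hφ₁ : Integrable φ₁ μ) (hφ₂ : Integrable φ₂ μ)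
    (hφ₁01 : ∀ x, φ₁ x ∈ Icc (0 : ℝ) 1) (hφ₂01 : ∀ x, φ₂ x ∈ Icc (0 : ℝ) 1) (g : G) :
    (∫ x, φ₁ x ∂μ) + (∫ x, φ₂ x ∂μ) - μ.real univ ≤ mulConv μ φ₁ φ₂ g := by
  have hsum : Integrable (fun x => φ₁ x + φ₂ (x⁻¹ * g)) μ := hφ₁.add (hφ₂.comp_inv_mul g)
  calc (∫ x, φ₁ x ∂μ) + (∫ x, φ₂ x ∂μ) - μ.real univ
      = ∫ x, (φ₁ x + φ₂ (x⁻¹ * g) - 1) ∂μ := by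
        rw [integral_sub hsum (integrable_const 1), integral_add hφ₁ (hφ₂.comp_inv_mul g),
          integral_inv_mul_eq_self, integral_const, smul_eq_mul, mul_one]
    _ ≤ mulConv μ φ₁ φ₂ g := by
        refine integral_mono (hsum.sub (integrable_const 1))
          (integrable_mul_comp_inv_mul hφ₁ hφ₂ hφ₂01 g) fun x => ?_
        obtain ⟨⟨a0, a1⟩, ⟨b0, b1⟩⟩ := And.intro (hφ₁01 x) (hφ₂01 (x⁻¹ * g))
        dsimp only
        nlinarith

theorem abs_mulConv_sub_mulConv_le (hφ₁ : Integrable φ₁ μ) (hφ₂ : Integrable φ₂ μ)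
    (hψ₁ : Integrable ψ₁ μ) (hψ₂ : Integrable ψ₂ μ) (hφ₁01 : ∀ x, φ₁ x ∈ Icc (0 : ℝ) 1)
    (hφ₂01 : ∀ x, φ₂ x ∈ Icc (0 : ℝ) 1) (hψ₂01 : ∀ x, ψ₂ x ∈ Icc (0 : ℝ) 1) (g : G) :
    |mulConv μ φ₁ φ₂ g - mulConv μ ψ₁ ψ₂ g| ≤
      (∫ x, ‖φ₁ x - ψ₁ x‖ ∂μ) + ∫ x, ‖φ₂ x - ψ₂ x‖ ∂μ := by
  have hd₁ : Integrable (fun x => ‖φ₁ x - ψ₁ x‖) μ := (hφ₁.sub hψ₁).norm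
  have hd₂ : Integrable (fun x => ‖φ₂ (x⁻¹ * g) - ψ₂ (x⁻¹ * g)‖) μ :=
    (hφ₂.sub hψ₂).norm.comp_inv_mul g
  rw [mulConv, mulConv, ← integral_sub (integrable_mul_comp_inv_mul hφ₁ hφ₂ hφ₂01 g)
    (integrable_mul_comp_inv_mul hψ₁ hψ₂ hψ₂01 g),
    ← integral_inv_mul_eq_self μ (fun x => ‖φ₂ x - ψ₂ x‖) g, ← integral_add hd₁ hd₂]
  refine abs_integral_le_integral_abs.trans (integral_mono_of_nonneg
    (Eventually.of_forall fun _ => abs_nonneg _) (hd₁.add hd₂) (Eventually.of_forall fun x => ?_))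
  obtain ⟨⟨a0, a1⟩, ⟨b0, b1⟩⟩ := And.intro (hφ₁01 x) (hψ₂01 (x⁻¹ * g))
  simp only [Real.norm_eq_abs]
  calc |φ₁ x * φ₂ (x⁻¹ * g) - ψ₁ x * ψ₂ (x⁻¹ * g)|
      = |φ₁ x * (φ₂ (x⁻¹ * g) - ψ₂ (x⁻¹ * g)) + (φ₁ x - ψ₁ x) * ψ₂ (x⁻¹ * g)| := by ring_nf
    _ ≤ |φ₁ x| * |φ₂ (x⁻¹ * g) - ψ₂ (x⁻¹ * g)| + |φ₁ x - ψ₁ x| * |ψ₂ (x⁻¹ * g)| := by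
        rw [← abs_mul, ← abs_mul]; exact abs_add_le _ _
    _ ≤ |φ₁ x - ψ₁ x| + |φ₂ (x⁻¹ * g) - ψ₂ (x⁻¹ * g)| := by
        rw [abs_of_nonneg a0, abs_of_nonneg b0]
        nlinarith [abs_nonneg (φ₁ x - ψ₁ x), abs_nonneg (φ₂ (x⁻¹ * g) - ψ₂ (x⁻¹ * g))]

theorem tendstoUniformly_mulConv {u₁ u₂ : ℕ → G → ℝ} (hφ₁ : Integrable φ₁ μ)
    (hφ₂ : Integrable φ₂ μ) (hu₁ : ∀ n, Integrable (u₁ n) μ) (hu₂ : ∀ n, Integrable (u₂ n) μ)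
    (hφ₁01 : ∀ x, φ₁ x ∈ Icc (0 : ℝ) 1) (hφ₂01 : ∀ x, φ₂ x ∈ Icc (0 : ℝ) 1)
    (hu₂01 : ∀ n x, u₂ n x ∈ Icc (0 : ℝ) 1)
    (hφu₁ : Tendsto (fun n => ∫ x, ‖φ₁ x - u₁ n x‖ ∂μ) atTop (𝓝 0))
    (hφu₂ : Tendsto (fun n => ∫ x, ‖φ₂ x - u₂ n x‖ ∂μ) atTop (𝓝 0)) :
    TendstoUniformly (fun n => mulConv μ (u₁ n) (u₂ n)) (mulConv μ φ₁ φ₂) atTop := by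
  refine Metric.tendstoUniformly_iff.2 fun ε hε => ?_
  filter_upwards [(hφu₁.add hφu₂).eventually (gt_mem_nhds (by simpa using hε))] with n hn g
  rw [Real.dist_eq]
  exact (abs_mulConv_sub_mulConv_le hφ₁ hφ₂ (hu₁ n) (hu₂ n) hφ₁01 hφ₂01 (hu₂01 n) g).trans_lt hn

variable [CompactSpace G] [μ.IsHaarMeasure]

theorem continuous_mulConv_of_integrable (hφ₁ : Integrable φ₁ μ) (hφ₂ : Integrable φ₂ μ)
    (hφ₁01 : ∀ x, φ₁ x ∈ Icc (0 : ℝ) 1) (hφ₂01 : ∀ x, φ₂ x ∈ Icc (0 : ℝ) 1) :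
    Continuous (mulConv μ φ₁ φ₂) := by
  obtain ⟨u₁, hu₁c, hu₁, -, hφu₁⟩ := hφ₁.exists_seq_continuous_Icc_tendsto hφ₁01
  obtain ⟨u₂, hu₂c, hu₂, hu₂01, hφu₂⟩ := hφ₂.exists_seq_continuous_Icc_tendsto hφ₂01
  exact (tendstoUniformly_mulConv hφ₁ hφ₂ hu₁ hu₂ hφ₁01 hφ₂01 hu₂01 hφu₁ hφu₂).continuous
    (Frequently.of_forall fun n => continuous_mulConv (hu₁c n) (hu₂c n))

theorem integral_mulConv (hφ₁ : Integrable φ₁ μ) (hφ₂ : Integrable φ₂ μ)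
    (hφ₁01 : ∀ x, φ₁ x ∈ Icc (0 : ℝ) 1) (hφ₂01 : ∀ x, φ₂ x ∈ Icc (0 : ℝ) 1) :
    ∫ g, mulConv μ φ₁ φ₂ g ∂μ = (∫ x, φ₁ x ∂μ) * ∫ x, φ₂ x ∂μ := by
  obtain ⟨u₁, hu₁c, hu₁, hu₁01, hφu₁⟩ := hφ₁.exists_seq_continuous_Icc_tendsto hφ₁01
  obtain ⟨u₂, hu₂c, hu₂, hu₂01, hφu₂⟩ := hφ₂.exists_seq_continuous_Icc_tendsto hφ₂01
  have hconv := tendstoUniformly_mulConv hφ₁ hφ₂ hu₁ hu₂ hφ₁01 hφ₂01 hu₂01 hφu₁ hφu₂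
  have hlim : Tendsto (fun n => ∫ g, mulConv μ (u₁ n) (u₂ n) g ∂μ) atTop
      (𝓝 (∫ g, mulConv μ φ₁ φ₂ g ∂μ)) :=
    tendsto_integral_of_dominated_convergence (fun _ => μ.real univ)
      (fun n => (continuous_mulConv (hu₁c n) (hu₂c n)).aestronglyMeasurable)
      (integrable_const _)
      (fun n => Eventually.of_forall (norm_mulConv_le_measureReal_univ (hu₁01 n) (hu₂01 n)))
      (Eventually.of_forall hconv.tendsto_at)
  refine tendsto_nhds_unique hlim ?_
  simp_rw [integral_mulConv_of_continuous (hu₁c _) (hu₂c _)]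
  exact (tendsto_integral_of_tendsto_integral_norm_sub hφ₁ hu₁ hφu₁).mul
    (tendsto_integral_of_tendsto_integral_norm_sub hφ₂ hu₂ hφu₂)

end Convolution

end MeasureTheory

theorem ft_convolution_of_small_volume_general
    {G : Type*} [Group G] [TopologicalSpace G] [IsTopologicalGroup G]
    [LocallyCompactSpace G] [MeasurableSpace G] [BorelSpace G]
    (μ : Measure G) [μ.IsHaarMeasure] [μ.IsMulRightInvariant]
    (φ1 φ2 : G → ℝ)
    (hφ1 : ∀ g, φ1 g ∈ Set.Icc (0 : ℝ) 1) (hφ2 : ∀ g, φ2 g ∈ Set.Icc (0 : ℝ) 1)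
    (hi1 : Integrable φ1 μ) (hi2 : Integrable φ2 μ)
    (hvol : μ Set.univ ≤ ENNReal.ofReal ((∫ g, φ1 g ∂μ) + ∫ g, φ2 g ∂μ))
    (t : ℝ)
    (ht : t ≤ (∫ g, φ1 g ∂μ) + (∫ g, φ2 g ∂μ) - (μ Set.univ).toReal) :
    (∫ g, max ((∫ g', φ1 g' * φ2 (g'⁻¹ * g) ∂μ) - t) 0 ∂μ) =
      (∫ g, φ1 g ∂μ) * (∫ g, φ2 g ∂μ) - t * (μ Set.univ).toReal := by
  have : IsFiniteMeasure μ := ⟨hvol.trans_lt ENNReal.ofReal_lt_top⟩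
  have : CompactSpace G := compactSpace_of_measure_univ_ne_top μ (measure_ne_top μ _)
  have : μ.IsInvInvariant := isInvInvariant_of_compactSpace μ
  have hle (g : G) : t ≤ mulConv μ φ1 φ2 g :=
    ht.trans (integral_add_integral_sub_measureReal_univ_le_mulConv hi1 hi2 hφ1 hφ2 g)
  have hint : Integrable (mulConv μ φ1 φ2) μ :=
    (continuous_mulConv_of_integrable hi1 hi2 hφ1 hφ2).integrable_of_hasCompactSupport
      (.of_compactSpace _)
  change ∫ g, max (mulConv μ φ1 φ2 g - t) 0 ∂μ = _
  calc ∫ g, max (mulConv μ φ1 φ2 g - t) 0 ∂μ = ∫ g, (mulConv μ φ1 φ2 g - t) ∂μ :=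
        integral_congr_ae (Eventually.of_forall fun g => max_eq_left (sub_nonneg.2 (hle g)))
    _ = (∫ g, φ1 g ∂μ) * (∫ g, φ2 g ∂μ) - t * (μ Set.univ).toReal := by
        rw [integral_sub hint (integrable_const t), integral_mulConv hi1 hi2 hφ1 hφ2,
          integral_const, smul_eq_mul, measureReal_def, mul_comm _ t]

/-- **Lemma 3.1 (2).** Let `G` be a connected unimodular locally compact group and
`φ1 φ2 : G → [0,1]` integrable with `vol G ≤ ‖φ1‖ + ‖φ2‖` (in particular `vol G < ∞`).
Then for every `0 ≤ t ≤ ‖φ1‖ + ‖φ2‖ - vol G`,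
`∫ max (φ1 * φ2 - t) 0 = ‖φ1‖ ‖φ2‖ - t vol G`. -/
theorem ft_convolution_of_small_volume
    {G : Type*} [Group G] [TopologicalSpace G] [IsTopologicalGroup G]
    [LocallyCompactSpace G] [MeasurableSpace G] [BorelSpace G]
    [ConnectedSpace G]
    (μ : Measure G) [μ.IsHaarMeasure] [μ.IsMulRightInvariant]
    (φ1 φ2 : G → ℝ)
    (hφ1 : ∀ g, φ1 g ∈ Set.Icc (0 : ℝ) 1) (hφ2 : ∀ g, φ2 g ∈ Set.Icc (0 : ℝ) 1)
    (hi1 : Integrable φ1 μ) (hi2 : Integrable φ2 μ)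
    (hvol : μ Set.univ ≤ ENNReal.ofReal ((∫ g, φ1 g ∂μ) + ∫ g, φ2 g ∂μ))
    (t : ℝ) (ht0 : 0 ≤ t)
    (ht : t ≤ (∫ g, φ1 g ∂μ) + (∫ g, φ2 g ∂μ) - (μ Set.univ).toReal) :
    (∫ g, max ((∫ g', φ1 g' * φ2 (g'⁻¹ * g) ∂μ) - t) 0 ∂μ) =
      (∫ g, φ1 g ∂μ) * (∫ g, φ2 g ∂μ) - t * (μ Set.univ).toReal :=
  ft_convolution_of_small_volume_general μ φ1 φ2 hφ1 hφ2 hi1 hi2 hvol t ht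
end

section
/- Let f : [0,1] → ℝ be a convex function with f(0) = 0 and let n ≥ 1 be an integer. Define f_(n) : [0,1] → ℝ by f_(n)(y) := n·( f(1/n)·y + 2·Σ_{k=1}^{n−1} ĥ_k · max(y − k/n, 0) ), where ĥ_k := (f((k−1)/n) + f((k+1)/n))/2 − f(k/n). Then for every 0 < y < 1 one has f_(n)(y) ≤ f(y) + f̂_0^1(y)/(4·n·y·(1−y)), where f̂_0^1(y) := (1−y)·f(0) + y·f(1) − f(y) = y·f(1) − f(y). -/
/-!
On the cell `[k/n, (k+1)/n]` containing `y`, `f_(n)` is the chord of `f` between the two nodes.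
Convexity bounds `f` at the left node by the chord of `f` over `[0, y]` and at the right node by the
chord over `[y, 1]`; interpolating these two bounds overshoots `f y` by
`(y - k/n) ((k+1)/n - y) n` times the jump of slopes at `y`, which is `f̂_0^1(y) / (y (1 - y))`,
and `(y - k/n) ((k+1)/n - y) n ≤ 1 / (4 n)`.
-/

open Finset

noncomputable section

/-- The paper's `f̃_{y₁}^{y₂}`. -/
def affineInterp (f : ℝ → ℝ) (y₁ y₂ y : ℝ) : ℝ :=
  ((y₂ - y) * f y₁ + (y - y₁) * f y₂) / (y₂ - y₁)

def gridHat (f : ℝ → ℝ) (n k : ℕ) : ℝ :=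
  (f (((k : ℝ) - 1) / n) + f (((k : ℝ) + 1) / n)) / 2 - f ((k : ℝ) / n)

def gridInterp (f : ℝ → ℝ) (n : ℕ) (y : ℝ) : ℝ :=
  n * (f (1 / n) * y + 2 * ∑ k ∈ Ico 1 n, gridHat f n k * max (y - k / n) 0)

end

theorem ConvexOn.le_affineInterp {s : Set ℝ} {f : ℝ → ℝ} (hf : ConvexOn ℝ s f)
    {y₁ y₂ y : ℝ} (h₁ : y₁ ∈ s) (h₂ : y₂ ∈ s) (h₁₂ : y₁ < y₂) (hy : y ∈ Set.Icc y₁ y₂) :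
    f y ≤ affineInterp f y₁ y₂ y := by
  have hpos : 0 < y₂ - y₁ := sub_pos.2 h₁₂
  have key := hf.2 h₁ h₂ (div_nonneg (sub_nonneg.2 hy.2) hpos.le)
    (div_nonneg (sub_nonneg.2 hy.1) hpos.le) (by field_simp; ring)
  have hy_eq : ((y₂ - y) / (y₂ - y₁)) • y₁ + ((y - y₁) / (y₂ - y₁)) • y₂ = y := by
    simp only [smul_eq_mul]; field_simp; ring
  rw [hy_eq] at key
  simpa only [affineInterp, smul_eq_mul, add_div, div_mul_eq_mul_div] using key

theorem ConvexOn.affineInterp_sub_le {s : Set ℝ} {f : ℝ → ℝ} (hf : ConvexOn ℝ s f)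
    {x₀ x₁ a b y : ℝ} (h₀ : x₀ ∈ s) (h₁ : x₁ ∈ s) (hx₀a : x₀ ≤ a) (hay : a ≤ y) (hyb : y ≤ b)
    (hbx₁ : b ≤ x₁) (hab : a < b) (hx₀y : x₀ < y) (hyx₁ : y < x₁) :
    affineInterp f a b y - f y ≤ (y - a) * (b - y) / (b - a) * (slope f y x₁ - slope f x₀ y) := by
  have hys : y ∈ s := hf.1.ordConnected.out h₀ h₁ ⟨hx₀y.le, hyx₁.le⟩
  have hfa : f a ≤ f y - (y - a) * slope f x₀ y := by
    convert hf.le_affineInterp h₀ hys hx₀y ⟨hx₀a, hay⟩ using 1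
    rw [affineInterp, slope_def_field]
    field_simp [(sub_pos.2 hx₀y).ne']
    ring
  have hfb : f b ≤ f y + (b - y) * slope f y x₁ := by
    convert hf.le_affineInterp hys h₁ hyx₁ ⟨hyb, hbx₁⟩ using 1
    rw [affineInterp, slope_def_field]
    field_simp [(sub_pos.2 hyx₁).ne']
    ring
  have hba : 0 < b - a := sub_pos.2 hab
  calc affineInterp f a b y - f y
      = ((b - y) * (f a - f y) + (y - a) * (f b - f y)) / (b - a) := by
        rw [affineInterp]; field_simp; ring
    _ ≤ ((b - y) * (-(y - a) * slope f x₀ y) + (y - a) * ((b - y) * slope f y x₁)) / (b - a) := by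
        gcongr <;> linarith
    _ = (y - a) * (b - y) / (b - a) * (slope f y x₁ - slope f x₀ y) := by ring

theorem sub_mul_sub_div_le {a b y : ℝ} (hab : a < b) :
    (y - a) * (b - y) / (b - a) ≤ (b - a) / 4 := by
  rw [div_le_div_iff₀ (sub_pos.2 hab) four_pos]
  nlinarith [sq_nonneg (2 * y - a - b)]

theorem mul_add_sum_gridHat_mul_eq {f : ℝ → ℝ} (hf0 : f 0 = 0) (n k : ℕ) (y : ℝ) :
    f (1 / n) * y + 2 * ∑ j ∈ Ico 1 (k + 1), gridHat f n j * (y - j / n) =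
      ((k + 1) / n - y) * f (k / n) + (y - k / n) * f ((k + 1) / n) := by
  induction k with
  | zero =>
    simp only [zero_add, Ico_self, sum_empty, mul_zero, add_zero, CharP.cast_eq_zero, zero_div, hf0,
      sub_zero]
    ring
  | succ k ih =>
    rw [sum_Ico_succ_top (by omega), mul_add, ← add_assoc, ih, gridHat]
    push_cast
    rw [add_sub_cancel_right]
    ring

theorem gridInterp_eq_affineInterp {f : ℝ → ℝ} (hf0 : f 0 = 0) {n k : ℕ} (hkn : k < n) {y : ℝ}
    (hy : y ∈ Set.Icc ((k : ℝ) / n) ((k + 1) / n)) :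
    gridInterp f n y = affineInterp f (k / n) ((k + 1) / n) y := by
  have hn : (0 : ℝ) < n := by exact_mod_cast (k.zero_le.trans_lt hkn)
  have hleft : ∀ j ∈ Ico 1 (k + 1),
      gridHat f n j * max (y - j / n) 0 = gridHat f n j * (y - j / n) := fun j hj ↦ by
    have hjk : (j : ℝ) ≤ k := by exact_mod_cast Nat.lt_succ_iff.1 (mem_Ico.1 hj).2
    rw [max_eq_left (sub_nonneg.2 <| le_trans (by gcongr) hy.1)]
  have hright : ∀ j ∈ Ico (k + 1) n, gridHat f n j * max (y - j / n) 0 = 0 := fun j hj ↦ by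
    have hkj : (k : ℝ) + 1 ≤ j := by exact_mod_cast (mem_Ico.1 hj).1
    rw [max_eq_right (sub_nonpos.2 <| hy.2.trans (by gcongr)), mul_zero]
  rw [gridInterp, ← sum_Ico_consecutive _ (by omega : 1 ≤ k + 1) hkn, sum_congr rfl hleft,
    sum_congr rfl hright, sum_const_zero, add_zero, mul_add_sum_gridHat_mul_eq hf0, affineInterp]
  field_simp
  ring

theorem exists_lt_mem_Icc_div {n : ℕ} (hn : 0 < n) {y : ℝ} (hy₀ : 0 ≤ y) (hy₁ : y < 1) :
    ∃ k < n, y ∈ Set.Icc ((k : ℝ) / n) ((k + 1) / n) := by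
  have hn' : (0 : ℝ) < n := by exact_mod_cast hn
  refine ⟨⌊n * y⌋₊, ?_, ?_, ?_⟩
  · exact (Nat.floor_lt (by positivity)).2 (by nlinarith)
  · rw [div_le_iff₀ hn', mul_comm]
    exact Nat.floor_le (by positivity)
  · rw [le_div_iff₀ hn', mul_comm]
    exact (Nat.lt_floor_add_one _).le

/-- **Lemma 6.1 (2).** Let `f : [0,1] → ℝ` be convex with `f 0 = 0` and `n ≥ 1`. Define
`f_(n)(y) := n (f(1/n) y + 2 ∑_{k=1}^{n-1} ĥ_k max (y - k/n) 0)` with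
`ĥ_k := (f((k-1)/n) + f((k+1)/n))/2 - f(k/n)`. Then for every `0 < y < 1`,
`f_(n)(y) ≤ f(y) + f̂_0^1(y) / (4 n y (1 - y))` where `f̂_0^1(y) = y f(1) - f(y)`. -/
theorem fn_close_to_f
    (f : ℝ → ℝ) (hf : ConvexOn ℝ (Set.Icc (0 : ℝ) 1) f) (hf0 : f 0 = 0)
    (n : ℕ) (hn : 1 ≤ n)
    (fn : ℝ → ℝ)
    (hfn : ∀ y : ℝ, fn y = (n : ℝ) * (f (1 / (n : ℝ)) * y +
      2 * ∑ k ∈ Finset.Ico 1 n,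
        ((f (((k : ℝ) - 1) / n) + f (((k : ℝ) + 1) / n)) / 2 - f ((k : ℝ) / n)) *
          max (y - (k : ℝ) / n) 0)) :
    ∀ y : ℝ, 0 < y → y < 1 →
      fn y ≤ f y + (y * f 1 - f y) / (4 * n * y * (1 - y)) := by
  obtain rfl : fn = gridInterp f n := funext hfn
  intro y hy₀ hy₁
  have hn' : (0 : ℝ) < n := by exact_mod_cast hn
  obtain ⟨k, hkn, hky⟩ := exists_lt_mem_Icc_div hn hy₀.le hy₁
  have hcell : (k : ℝ) / n < (k + 1) / n := by gcongr; linarith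
  have hslope_nonneg : 0 ≤ slope f y 1 - slope f 0 y := by
    simpa only [sub_nonneg, slope_def_field] using
      hf.slope_mono_adjacent (by simp) (by simp) hy₀ hy₁
  have hslope : slope f y 1 - slope f 0 y = (y * f 1 - f y) / (y * (1 - y)) := by
    rw [slope_def_field, slope_def_field, hf0]
    field_simp [hy₀.ne', (sub_pos.2 hy₁).ne']
    ring
  have hlocal := hf.affineInterp_sub_le (by simp) (by simp) (by positivity) hky.1 hky.2
    (by rw [div_le_one hn']; exact_mod_cast hkn) hcell hy₀ hy₁
  calc gridInterp f n y
      = affineInterp f (k / n) ((k + 1) / n) y := gridInterp_eq_affineInterp hf0 hkn hky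
    _ ≤ f y + (y - k / n) * ((k + 1) / n - y) / ((k + 1) / n - k / n) *
          (slope f y 1 - slope f 0 y) := by linarith
    _ ≤ f y + ((k + 1) / n - k / n) / 4 * (slope f y 1 - slope f 0 y) := by
        gcongr f y + ?_ * _
        exact sub_mul_sub_div_le hcell
    _ = f y + (y * f 1 - f y) / (4 * n * y * (1 - y)) := by
        rw [hslope]; field_simp; ring
end
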